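/- arXiv:0911.3350 — 2 statements merged into one kernel-verified Lean document; each statement's English description precedes it below -/
import Mathlib

section
/- Let m ≥ 2 and let B be a blocker in CK(2m). Then the boundary edges of B form a path of consecutive boundary edges: there exist r ∈ ZMod (2m) and an integer t with 2 ≤ t ≤ m such that the set of boundary edges belonging to B is exactly {{r+ν, r+ν+1} : 0 ≤ ν ≤ t−1}. -/
def inArc (n : ℕ) (a b z : ZMod n) : Prop :=
  0 < (z - a).val ∧ (z - a).val < (b - a).val

def Cross (n : ℕ) (e f : Sym2 (ZMod n)) : Prop :=
  ∃ a b c d : ZMod n, e = s(a, b) ∧ f = s(c, d) ∧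
    a ≠ b ∧ a ≠ c ∧ a ≠ d ∧ b ≠ c ∧ b ≠ d ∧ c ≠ d ∧
    Xor' (inArc n a b c) (inArc n a b d)

def IsSPM (m : ℕ) (M : Finset (Sym2 (ZMod (2 * m)))) : Prop :=
  M.card = m ∧
  (∀ e ∈ M, ¬ e.IsDiag) ∧
  (∀ v : ZMod (2 * m), ∃! e, e ∈ M ∧ v ∈ e) ∧
  (∀ e ∈ M, ∀ f ∈ M, ¬ Cross (2 * m) e f)

def IsBlockingSet (m : ℕ) (B : Set (Sym2 (ZMod (2 * m)))) : Prop :=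
  (∀ e ∈ B, ¬ e.IsDiag) ∧
  ∀ M : Finset (Sym2 (ZMod (2 * m))), IsSPM m M → ∃ e ∈ M, e ∈ B

def IsBlocker (m : ℕ) (B : Finset (Sym2 (ZMod (2 * m)))) : Prop :=
  IsBlockingSet m (B : Set (Sym2 (ZMod (2 * m)))) ∧ B.card = m

def IsBoundaryEdge (m : ℕ) (e : Sym2 (ZMod (2 * m))) : Prop :=
  ∃ i : ZMod (2 * m), e = s(i, i + 1)

def edgeOrder {n : ℕ} (e : Sym2 (ZMod n)) : ℕ :=
  Sym2.lift ⟨fun i j => min (i - j).val (j - i).val, fun i j => min_comm _ _⟩ e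

def edgeSum {n : ℕ} (e : Sym2 (ZMod n)) : ZMod n :=
  Sym2.lift ⟨fun i j => i + j, fun i j => add_comm i j⟩ e

/-!
For each `c`, the chords `s(c - k, c + k + 1)`, `k < m` (the edges with endpoint sum `2c + 1`)
form an SPM, and the `m` such parallel classes are pairwise disjoint. A blocker has `m` edges, so
it contains exactly one chord of each class; call its index `k` the level of `c`. Boundary edges
`s(c, c + 1)` of the blocker are the points of level `0`, and the antipodal classes coincide,
giving `level (c + m) = m - 1 - level c`.

If `level (c - 1) ≤ a ≤ level c`, the blocker meets the SPM made of the boundary edge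
`s(c - 1 - a, c - a)`, the chords of class `c` below level `a` and those of class `c - 1` above
level `a`; only the boundary edge can be the common edge, so `level (c - 1 - a) = 0`. Iterating
this from the first zero `z` of a run gives `level (z + j) < j` for `j > 0`, so no level vanishes
on the half-circle opposite to `z`. Hence there is only one run of zeros, an arc of length
between `2` and `m`.
-/

open Finset

namespace ZMod

variable {n : ℕ}

theorem eq_add_natCast_iff [NeZero n] {x v : ZMod n} {i : ℕ} (hi : i < n) :
    v = x + i ↔ (v - x).val = i := by
  constructor
  · rintro rfl
    rw [add_sub_cancel_left, val_cast_of_lt hi]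
  · intro h
    rw [← h, natCast_zmod_val, add_sub_cancel]

theorem add_natCast_inj [NeZero n] {x : ZMod n} {i j : ℕ} (hi : i < n) (hj : j < n) :
    x + i = x + j ↔ i = j := by
  rw [eq_add_natCast_iff hj, add_sub_cancel_left, val_cast_of_lt hi]

theorem val_natCast_sub_natCast {i j : ℕ} (hi : i < n) (hj : j < n) :
    ((i : ZMod n) - j).val = if j ≤ i then i - j else i + n - j := by
  split_ifs with h
  · rw [← Nat.cast_sub h, val_cast_of_lt (by omega)]
  · rw [← val_cast_of_lt (show i + n - j < n by omega), Nat.cast_sub (by omega), Nat.cast_add,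
      natCast_self, add_zero]

theorem natCast_inj_of_lt {n i j : ℕ} (hi : i < n) (hj : j < n) :
    (i : ZMod n) = j ↔ i = j :=
  ⟨fun h => by simpa only [val_cast_of_lt hi, val_cast_of_lt hj] using congrArg val h,
    by rintro rfl; rfl⟩

section Arc

variable [NeZero n] {S : Set (ZMod n)}

theorem exists_mem_sub_one_notMem {p q : ZMod n} (hp : p ∈ S) (hq : q ∉ S) :
    ∃ z ∈ S, z - 1 ∉ S := by
  by_contra! h
  have hsub : ∀ j : ℕ, p - j ∈ S := by
    intro j
    induction j with
    | zero => simpa using hp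
    | succ j ih => simpa [sub_sub] using h _ ih
  exact hq (by simpa using hsub (p - q).val)

theorem exists_eq_arc_of_unique {z : ZMod n} (hz : z ∈ S) (hz1 : z - 1 ∉ S)
    (huniq : ∀ w ∈ S, w - 1 ∉ S → w = z) : ∃ t : ℕ, ∀ c, c ∈ S ↔ ∃ ν < t, c = z + ν := by
  classical
  have hex : ∃ j : ℕ, z + j ∉ S := ⟨(-1 : ZMod n).val, by simpa [← sub_eq_add_neg] using hz1⟩
  have hout : z + Nat.find hex ∉ S := Nat.find_spec hex
  have key : ∀ i < n, z + i ∈ S → i < Nat.find hex := by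
    intro i
    induction i with
    | zero => exact fun _ _ => (Nat.find_pos hex).2 (by simpa using hz)
    | succ i ih =>
      intro hi hmem
      by_cases hprev : z + i ∈ S
      · have := ih (by omega) hprev
        have : i + 1 ≠ Nat.find hex := fun h => hout (h ▸ hmem)
        omega
      · have := huniq _ hmem (by rwa [Nat.cast_succ, ← add_assoc, add_sub_cancel_right])
        have := (add_natCast_inj (x := z) hi (NeZero.pos n)).1 (by simpa using this)
        omega
  refine ⟨Nat.find hex, fun c => ⟨fun hc => ?_, ?_⟩⟩
  · exact ⟨(c - z).val, key _ (val_lt _) (by simpa using hc), by simp⟩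
  · rintro ⟨ν, hν, rfl⟩
    exact not_not.1 (Nat.find_min hex hν)

end Arc

end ZMod

open ZMod

theorem Finset.card_inter_eq_one_of_pairwiseDisjoint {ι α : Type*} [DecidableEq α]
    {s : Finset ι} {P : ι → Finset α} {B : Finset α} (hP : (s : Set ι).PairwiseDisjoint P)
    (hB : #B ≤ #s) (hmeet : ∀ i ∈ s, (B ∩ P i).Nonempty) {i : ι} (hi : i ∈ s) :
    #(B ∩ P i) = 1 := by
  have hsum : ∑ i ∈ s, #(B ∩ P i) ≤ ∑ _i ∈ s, 1 := calc
    ∑ i ∈ s, #(B ∩ P i) = #(s.biUnion fun i => B ∩ P i) :=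
      (card_biUnion (hP.mono fun _ => inter_subset_right)).symm
    _ ≤ #B := card_le_card (biUnion_subset.2 fun _ _ => inter_subset_left)
    _ ≤ ∑ _i ∈ s, 1 := by simpa using hB
  have hpos : ∀ i ∈ s, 1 ≤ #(B ∩ P i) := fun i hi => (hmeet i hi).card_pos
  exact ((sum_eq_sum_iff_of_le hpos).1 (le_antisymm (sum_le_sum hpos) hsum) i hi).symm

theorem cross_irrefl (n : ℕ) (e : Sym2 (ZMod n)) : ¬ Cross n e e := by
  rintro ⟨a, b, c, d, rfl, hf, -, hac, had, -, -, -, -⟩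
  rcases Sym2.eq_iff.1 hf with ⟨h, -⟩ | ⟨h, -⟩
  exacts [hac h, had h]

theorem not_cross_add_natCast {n : ℕ} (x : ZMod n) {a b c d : ℕ} (hab : a < b) (hb : b < n)
    (hcd : c < d) (hd : d < n) (h : b < c ∨ d < a ∨ (a < c ∧ d < b) ∨ (c < a ∧ b < d)) :
    ¬ Cross n s(x + a, x + b) s(x + c, x + d) := by
  have ha : a < n := hab.trans hb
  have hc : c < n := hcd.trans hd
  rintro ⟨u, v, w, y, huv, hwy, -, -, -, -, -, -, hx : Xor _ _⟩
  rcases Sym2.eq_iff.1 huv with ⟨rfl, rfl⟩ | ⟨rfl, rfl⟩ <;>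
  rcases Sym2.eq_iff.1 hwy with ⟨rfl, rfl⟩ | ⟨rfl, rfl⟩ <;>
  simp only [inArc, add_sub_add_left_eq_sub, val_natCast_sub_natCast, ha, hb, hc, hd, Xor] at hx <;>
  split_ifs at hx <;> omega

section Laminar

variable {m : ℕ} [NeZero m]

theorem isSPM_image_of_laminar (x : ZMod (2 * m)) (E : ℕ → Sym2 (ZMod (2 * m)))
    (p q : ℕ → ℕ) (hE : ∀ i < m, E i = s(x + p i, x + q i))
    (hlt : ∀ i < m, p i < q i ∧ q i < 2 * m)
    (hcover : ∀ v < 2 * m, ∃ i < m, v = p i ∨ v = q i)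
    (hlam : ∀ i < m, ∀ j < m, i ≠ j → q i < p j ∨ q j < p i ∨
      (p i < p j ∧ q j < q i) ∨ (p j < p i ∧ q i < q j)) :
    IsSPM m ((range m).image E) := by
  have hp : ∀ i < m, p i < 2 * m := fun i hi => (hlt i hi).1.trans (hlt i hi).2
  have mem_E : ∀ i < m, ∀ v, v ∈ E i ↔ (v - x).val = p i ∨ (v - x).val = q i := by
    intro i hi v
    rw [hE i hi, Sym2.mem_iff, eq_add_natCast_iff (hp i hi), eq_add_natCast_iff (hlt i hi).2]
  have eq_of_common_end : ∀ i < m, ∀ j < m, ∀ w,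
      (w = p i ∨ w = q i) → (w = p j ∨ w = q j) → i = j := by
    intro i hi j hj w hwi hwj
    by_contra hij
    have := hlam i hi j hj hij
    have := hlt i hi
    have := hlt j hj
    omega
  have E_inj : Set.InjOn E (range m) := by
    intro i hi j hj hij
    rw [coe_range, Set.mem_Iio] at hi hj
    have hx : (x + p i - x).val = p i := by rw [add_sub_cancel_left, val_cast_of_lt (hp i hi)]
    have hmem : x + p i ∈ E j := by rw [← hij, mem_E i hi]; exact Or.inl hx
    rw [mem_E j hj, hx] at hmem
    exact eq_of_common_end i hi j hj _ (Or.inl rfl) hmem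
  refine ⟨by rw [card_image_of_injOn E_inj, card_range], ?_, fun v => ?_, ?_⟩
  · simp only [mem_image, mem_range]
    rintro _ ⟨i, hi, rfl⟩
    rw [hE i hi, Sym2.mk_isDiag_iff, add_natCast_inj (hp i hi) (hlt i hi).2]
    exact (hlt i hi).1.ne
  · obtain ⟨i, hi, hv⟩ := hcover (v - x).val (val_lt _)
    refine ⟨E i, ⟨mem_image_of_mem _ (mem_range.2 hi), (mem_E i hi v).2 hv⟩, ?_⟩
    rintro _ ⟨he, hve⟩
    obtain ⟨j, hj, rfl⟩ := mem_image.1 he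
    rw [mem_range] at hj
    rw [eq_of_common_end j hj i hi _ ((mem_E j hj v).1 hve) hv]
  · simp only [mem_image, mem_range]
    rintro _ ⟨i, hi, rfl⟩ _ ⟨j, hj, rfl⟩
    obtain rfl | hij := eq_or_ne i j
    · exact cross_irrefl _ _
    rw [hE i hi, hE j hj]
    exact not_cross_add_natCast x (hlt i hi).1 (hlt i hi).2 (hlt j hj).1 (hlt j hj).2
      (hlam i hi j hj hij)

end Laminar

theorem two_mul_natCast_eq_zero (m : ℕ) : 2 * (m : ZMod (2 * m)) = 0 := by
  exact_mod_cast natCast_self (2 * m)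

def parallelChord {n : ℕ} (c : ZMod n) (k : ℕ) : Sym2 (ZMod n) := s(c - k, c + k + 1)

@[simp]
theorem parallelChord_zero {n : ℕ} (c : ZMod n) : parallelChord c 0 = s(c, c + 1) := by
  simp [parallelChord]

def parallelClass (m : ℕ) (c : ZMod (2 * m)) : Finset (Sym2 (ZMod (2 * m))) :=
  (range m).image (parallelChord c)

def daggerMatching (m : ℕ) (c : ZMod (2 * m)) (a : ℕ) : Finset (Sym2 (ZMod (2 * m))) :=
  (range m).image fun i =>
    if i < a then parallelChord c i
    else if i = a then s(c - 1 - a, c - 1 - a + 1)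
    else parallelChord (c - 1) i

section Chords

variable {m : ℕ}

theorem parallelChord_add_half (c : ZMod (2 * m)) {k : ℕ} (hk : k < m) :
    parallelChord (c + (m : ZMod (2 * m))) (m - 1 - k) = parallelChord c k := by
  rw [parallelChord, parallelChord, Nat.cast_sub (by omega), Nat.cast_sub (by omega), Sym2.eq_iff]
  exact Or.inr ⟨by ring, by linear_combination two_mul_natCast_eq_zero m⟩

theorem parallelChord_inj (c : ZMod (2 * m)) {k k' : ℕ} (hk : k < m) (hk' : k' < m) :
    parallelChord c k = parallelChord c k' ↔ k = k' := by
  refine ⟨fun h => ?_, congrArg _⟩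
  rcases Sym2.eq_iff.1 h with ⟨h, -⟩ | ⟨h, -⟩
  · exact (natCast_inj_of_lt (n := 2 * m) (by omega) (by omega)).1 (by linear_combination -h)
  · have := (natCast_inj_of_lt (n := 2 * m) (i := k + k' + 1) (j := 0) (by omega) (by omega)).1
      (by push_cast; linear_combination -h)
    omega

theorem eq_of_parallelChord_eq {i j k k' : ℕ} (hi : i < m) (hj : j < m)
    (h : parallelChord (i : ZMod (2 * m)) k = parallelChord (j : ZMod (2 * m)) k') : i = j := by
  have hsum : ((2 * i + 1 : ℕ) : ZMod (2 * m)) = (2 * j + 1 : ℕ) := by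
    push_cast
    rcases Sym2.eq_iff.1 h with ⟨h₁, h₂⟩ | ⟨h₁, h₂⟩ <;> linear_combination h₁ + h₂
  have := (natCast_inj_of_lt (by omega) (by omega)).1 hsum
  omega

theorem parallelClass_add_half (c : ZMod (2 * m)) : parallelClass m (c + m) = parallelClass m c := by
  ext e
  simp only [parallelClass, mem_image, mem_range]
  constructor
  · rintro ⟨k, hk, rfl⟩
    have h := parallelChord_add_half c (show m - 1 - k < m by omega)
    rw [show m - 1 - (m - 1 - k) = k by omega] at h
    exact ⟨m - 1 - k, by omega, h.symm⟩
  · rintro ⟨k, hk, rfl⟩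
    exact ⟨m - 1 - k, by omega, parallelChord_add_half c hk⟩

theorem pairwiseDisjoint_parallelClass :
    ((range m : Finset ℕ) : Set ℕ).PairwiseDisjoint fun i : ℕ => parallelClass m i := by
  intro i hi j hj hij
  simp only [coe_range, Set.mem_Iio] at hi hj
  simp only [Function.onFun, parallelClass, disjoint_left, mem_image]
  rintro _ ⟨k, -, rfl⟩ ⟨k', -, h⟩
  exact hij (eq_of_parallelChord_eq hi hj h.symm)

variable [NeZero m]

theorem isSPM_parallelClass (c : ZMod (2 * m)) : IsSPM m (parallelClass m c) := by
  refine isSPM_image_of_laminar (c + 1) _ (fun k => k) (fun k => 2 * m - 1 - k) (fun k hk => ?_)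
    (fun k hk => by omega) (fun v hv => ?_) (fun i hi j hj hij => by omega)
  · rw [parallelChord, Nat.cast_sub (by omega), Nat.cast_sub (by omega), Sym2.eq_iff]
    push_cast
    exact Or.inr ⟨by linear_combination -two_mul_natCast_eq_zero m, by ring⟩
  · by_cases h : v < m
    · exact ⟨v, h, Or.inl rfl⟩
    · exact ⟨2 * m - 1 - v, by omega, Or.inr (by omega)⟩

theorem isSPM_daggerMatching (c : ZMod (2 * m)) {a : ℕ} (ha : a < m) :
    IsSPM m (daggerMatching m c a) := by
  refine isSPM_image_of_laminar (c - 1 - (a : ZMod (2 * m))) _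
    (fun i => if i < a then a + 1 - i else if i = a then 0 else a + 1 + i)
    (fun i => if i < a then a + 2 + i else if i = a then 1 else 2 * m + a - i)
    (fun i hi => ?_) (fun i hi => by split_ifs <;> omega) (fun v hv => ?_)
    (fun i hi j hj hij => by split_ifs <;> omega)
  · split_ifs
    · rw [parallelChord, Nat.cast_sub (by omega), Sym2.eq_iff]
      left
      constructor <;> push_cast <;> ring
    · simp
    · rw [parallelChord, Nat.cast_sub (by omega), Sym2.eq_iff]
      push_cast
      exact Or.inr ⟨by linear_combination -two_mul_natCast_eq_zero m, by ring⟩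
  · rcases lt_or_ge v 2 with h | h
    · exact ⟨a, ha, by simp only [lt_irrefl, if_false, if_true]; omega⟩
    rcases le_or_gt v (2 * a + 1) with h' | h'
    · rcases le_or_gt v (a + 1) with h'' | h''
      · exact ⟨a + 1 - v, by omega, by split_ifs <;> omega⟩
      · exact ⟨v - a - 2, by omega, by split_ifs <;> omega⟩
    rcases le_or_gt v (a + m) with h'' | h''
    · exact ⟨v - a - 1, by omega, by split_ifs <;> omega⟩
    · exact ⟨2 * m + a - v, by omega, by split_ifs <;> omega⟩

end Chords

noncomputable def level {n : ℕ} (B : Finset (Sym2 (ZMod n))) (c : ZMod n) : ℕ :=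
  sInf {k | parallelChord c k ∈ B}

namespace IsBlocker

variable {m : ℕ} [NeZero m] {B : Finset (Sym2 (ZMod (2 * m)))}

theorem inter_parallelClass_nonempty (hB : IsBlocker m B) (c : ZMod (2 * m)) :
    (B ∩ parallelClass m c).Nonempty := by
  obtain ⟨e, he, heB⟩ := hB.1.2 _ (isSPM_parallelClass c)
  exact ⟨e, mem_inter.2 ⟨heB, he⟩⟩

theorem card_inter_parallelClass (hB : IsBlocker m B) (c : ZMod (2 * m)) :
    #(B ∩ parallelClass m c) = 1 := by
  have hclass : ∀ i < m, #(B ∩ parallelClass m i) = 1 := fun i hi =>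
    card_inter_eq_one_of_pairwiseDisjoint pairwiseDisjoint_parallelClass
      (by rw [hB.2, card_range]) (fun i _ => hB.inter_parallelClass_nonempty i) (mem_range.2 hi)
  rcases lt_or_ge c.val m with h | h
  · simpa using hclass c.val h
  · have hc : ((c.val - m : ℕ) : ZMod (2 * m)) + m = c := by
      rw [Nat.cast_sub h, sub_add_cancel, natCast_zmod_val]
    rw [← hc, parallelClass_add_half]
    exact hclass _ (by have := val_lt c; omega)

theorem level_spec (hB : IsBlocker m B) (c : ZMod (2 * m)) :
    level B c < m ∧ parallelChord c (level B c) ∈ B := by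
  obtain ⟨e, he⟩ := hB.inter_parallelClass_nonempty c
  obtain ⟨heB, hec⟩ := mem_inter.1 he
  obtain ⟨k, hk, rfl⟩ := mem_image.1 hec
  exact ⟨(Nat.sInf_le heB).trans_lt (mem_range.1 hk),
    Nat.sInf_mem (s := {k | parallelChord c k ∈ B}) ⟨k, heB⟩⟩

theorem level_eq (hB : IsBlocker m B) {c : ZMod (2 * m)} {k : ℕ} (hk : k < m)
    (hkB : parallelChord c k ∈ B) : level B c = k := by
  obtain ⟨hlt, hmem⟩ := hB.level_spec c
  refine (parallelChord_inj c hlt hk).1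
    (card_le_one.1 (hB.card_inter_parallelClass c).le _ ?_ _ ?_)
  · exact mem_inter.2 ⟨hmem, mem_image_of_mem _ (mem_range.2 hlt)⟩
  · exact mem_inter.2 ⟨hkB, mem_image_of_mem _ (mem_range.2 hk)⟩

theorem level_add_half (hB : IsBlocker m B) (c : ZMod (2 * m)) :
    level B (c + m) = m - 1 - level B c := by
  obtain ⟨hlt, hmem⟩ := hB.level_spec c
  exact hB.level_eq (by omega) ((parallelChord_add_half c hlt).symm ▸ hmem)

theorem level_eq_zero_iff (hB : IsBlocker m B) (c : ZMod (2 * m)) :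
    level B c = 0 ↔ s(c, c + 1) ∈ B :=
  ⟨fun h => by simpa [h] using (hB.level_spec c).2,
    fun h => hB.level_eq (NeZero.pos m) (by simpa using h)⟩

theorem level_sub_one_sub_eq_zero (hB : IsBlocker m B) {c : ZMod (2 * m)} {a : ℕ}
    (h₁ : level B (c - 1) ≤ a) (h₂ : a ≤ level B c) : level B (c - 1 - a) = 0 := by
  have ha : a < m := h₂.trans_lt (hB.level_spec c).1
  obtain ⟨e, he, heB⟩ := hB.1.2 _ (isSPM_daggerMatching c ha)
  obtain ⟨i, hi, rfl⟩ := mem_image.1 he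
  split_ifs at heB with hia hia'
  · have := hB.level_eq (hia.trans ha) heB
    omega
  · exact (hB.level_eq_zero_iff _).2 heB
  · have := hB.level_eq (mem_range.1 hi) heB
    omega

end IsBlocker

def IsRunStart {n : ℕ} (K : ZMod n → ℕ) (z : ZMod n) : Prop := K z = 0 ∧ K (z - 1) ≠ 0

section RunStart

variable {m : ℕ} {K : ZMod (2 * m) → ℕ}

theorem IsRunStart.apply_add_lt
    (hdagger : ∀ (c : ZMod (2 * m)) (a : ℕ), K (c - 1) ≤ a → a ≤ K c → K (c - 1 - a) = 0)
    {z : ZMod (2 * m)} (hz : IsRunStart K z) {j : ℕ} (hj : 0 < j) : K (z + j) < j := by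
  have step : ∀ j : ℕ, K (z + j) ≤ j → K (z + (j + 1 : ℕ)) < j + 1 := by
    intro j hK
    by_contra! hge
    have hprev : z + (j + 1 : ℕ) - 1 = z + j := by push_cast; ring
    have := hdagger _ _ (by rw [hprev]; omega) hge
    exact hz.2 (by rwa [show z + (j + 1 : ℕ) - 1 - (j + 1 : ℕ) = z - 1 by ring] at this)
  have hle : ∀ j : ℕ, K (z + j) ≤ j := by
    intro j
    induction j with
    | zero => simp [hz.1]
    | succ j ih => exact (step j ih).le
  obtain ⟨j, rfl⟩ := Nat.exists_eq_add_of_lt hj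
  simpa using step j (hle j)

theorem IsRunStart.apply_add_half_ne_zero (hm : 2 ≤ m) (hanti : ∀ c, K (c + m) = m - 1 - K c)
    (hdagger : ∀ (c : ZMod (2 * m)) (a : ℕ), K (c - 1) ≤ a → a ≤ K c → K (c - 1 - a) = 0)
    {z : ZMod (2 * m)} (hz : IsRunStart K z) {j : ℕ} (hj : j < m) : K (z + m + j) ≠ 0 := by
  have hlt : K (z + j) < m - 1 := by
    rcases Nat.eq_zero_or_pos j with rfl | hj0
    · simp only [Nat.cast_zero, add_zero, hz.1]
      omega
    · have := hz.apply_add_lt hdagger hj0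
      omega
  rw [add_right_comm, hanti]
  omega

theorem IsRunStart.unique (hm : 2 ≤ m) (hanti : ∀ c, K (c + m) = m - 1 - K c)
    (hdagger : ∀ (c : ZMod (2 * m)) (a : ℕ), K (c - 1) ≤ a → a ≤ K c → K (c - 1 - a) = 0)
    {z z' : ZMod (2 * m)} (hz : IsRunStart K z) (hz' : IsRunStart K z') : z' = z := by
  have : NeZero m := ⟨by omega⟩
  set d := (z' - z).val
  have hd : z' = z + d := by simp [d]
  have hd2 : d < 2 * m := val_lt _
  by_cases hmd : m ≤ d
  · refine absurd hz'.1 ?_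
    have heq : z + m + ((d - m : ℕ) : ZMod (2 * m)) = z' := by rw [hd, Nat.cast_sub hmd]; ring
    simpa [heq] using hz.apply_add_half_ne_zero hm hanti hdagger (j := d - m) (by omega)
  rcases Nat.eq_zero_or_pos d with h0 | hpos
  · simpa [h0] using hd
  refine absurd hz.1 ?_
  have heq : z' + m + ((m - d : ℕ) : ZMod (2 * m)) = z := by
    rw [hd, Nat.cast_sub (by omega)]
    linear_combination two_mul_natCast_eq_zero m
  simpa [heq] using hz'.apply_add_half_ne_zero hm hanti hdagger (j := m - d) (by omega)

theorem exists_zeros_eq_arc (hm : 2 ≤ m) (hanti : ∀ c, K (c + m) = m - 1 - K c)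
    (hdagger : ∀ (c : ZMod (2 * m)) (a : ℕ), K (c - 1) ≤ a → a ≤ K c → K (c - 1 - a) = 0) :
    ∃ (r : ZMod (2 * m)) (t : ℕ), 2 ≤ t ∧ t ≤ m ∧ ∀ c, K c = 0 ↔ ∃ ν < t, c = r + ν := by
  have : NeZero m := ⟨by omega⟩
  obtain ⟨c₀, hc₀⟩ := Finite.exists_max K
  have hp : K (c₀ - 1 - K c₀) = 0 := hdagger c₀ _ (hc₀ _) le_rfl
  have hq : K (c₀ - 1 - K c₀ + m) ≠ 0 := by
    rw [hanti, hp]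
    omega
  obtain ⟨z, hz, hz1⟩ := exists_mem_sub_one_notMem (S := {c | K c = 0}) hp hq
  have hstart : IsRunStart K z := ⟨hz, hz1⟩
  obtain ⟨t, ht⟩ := exists_eq_arc_of_unique (S := {c | K c = 0}) hz hz1
    fun w hw hw1 => IsRunStart.unique hm hanti hdagger hstart ⟨hw, hw1⟩
  have htm : t ≤ m := by
    by_contra! h
    exact hstart.apply_add_half_ne_zero hm hanti hdagger (j := 0) (by omega)
      (by simpa using (ht (z + m)).2 ⟨m, h, rfl⟩)
  refine ⟨z, t, ?_, htm, ht⟩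
  obtain ⟨ν, hν, h⟩ := (ht (z + (1 : ℕ))).1 (by simpa using hstart.apply_add_lt hdagger one_pos)
  have := (add_natCast_inj (by omega) (by omega)).1 h
  omega

end RunStart

theorem boundary_edges_consecutive (m : ℕ) (hm : 2 ≤ m)
    (B : Finset (Sym2 (ZMod (2 * m)))) (hB : IsBlocker m B) :
    ∃ (r : ZMod (2 * m)) (t : ℕ), 2 ≤ t ∧ t ≤ m ∧
      ∀ e : Sym2 (ZMod (2 * m)),
        (e ∈ B ∧ IsBoundaryEdge m e) ↔
          ∃ ν : ℕ, ν < t ∧ e = s(r + (ν : ZMod (2 * m)), r + (ν : ZMod (2 * m)) + 1) := by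
  have : NeZero m := ⟨by omega⟩
  obtain ⟨r, t, ht2, htm, hzero⟩ :=
    exists_zeros_eq_arc hm hB.level_add_half fun _ _ => hB.level_sub_one_sub_eq_zero
  refine ⟨r, t, ht2, htm, fun e => ⟨?_, ?_⟩⟩
  · rintro ⟨heB, i, rfl⟩
    obtain ⟨ν, hν, rfl⟩ := (hzero i).1 ((hB.level_eq_zero_iff i).2 heB)
    exact ⟨ν, hν, rfl⟩
  · rintro ⟨ν, hν, rfl⟩
    exact ⟨(hB.level_eq_zero_iff _).1 ((hzero _).2 ⟨ν, hν, rfl⟩), _, rfl⟩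
end

section
/- Let m ≥ 2 and let B be a blocker in CK(2m) such that e = {2m−3, 2m−2} ∈ B and f = {2m−2, 2m−1} ∉ B. Then no edge of B other than e contains the vertex 2m−2 or the vertex 2m−1. -/
/-! The vertices `0, …, 2m - 3` span a `(2m - 2)`-gon. For each `j < m - 1` the chords `{x, y}`
with `x + y ≡ 2j + 1 (mod 2m - 2)` are parallel, hence pairwise non-crossing, and form a perfect
matching of that polygon; adding `f = {2m - 2, 2m - 1}` gives `m - 1` simple perfect matchings of
`CK(2m)` whose only common edge is `f`. A blocker avoiding `f` must therefore contain `m - 1`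
distinct edges missing both endpoints of `f`, which leaves room for only one edge of `B` at
`2m - 2` or `2m - 1`, namely `e`. -/

open Finset

lemma ZMod.val_natCast_sub_natCast_s16 {n x y : ℕ} (hx : x < n) (hy : y < n) :
    ((x : ZMod n) - y).val = if y ≤ x then x - y else x + n - y := by
  split_ifs with h
  · rw [← Nat.cast_sub h, ZMod.val_cast_of_lt (by omega)]
  · have hcast : (x : ZMod n) - y = ((x + n - y : ℕ) : ZMod n) := by
      rw [Nat.cast_sub (by omega), Nat.cast_add, ZMod.natCast_self, add_zero]
    rw [hcast, ZMod.val_cast_of_lt (by omega)]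

lemma inArc_natCast_iff {n a b z : ℕ} (ha : a < n) (hb : b < n) (hz : z < n) :
    inArc n a b z ↔ a < z ∧ z < b ∨ b < a ∧ (a < z ∨ z < b) := by
  rw [inArc, ZMod.val_natCast_sub_natCast_s16 hz ha, ZMod.val_natCast_sub_natCast_s16 hb ha]
  split_ifs <;> omega

lemma cross_natCast {n a b c d : ℕ} (ha : a < n) (hb : b < n) (hc : c < n) (hd : d < n)
    (h : Cross n s((a : ZMod n), (b : ZMod n)) s((c : ZMod n), (d : ZMod n))) :
    Xor (min a b < c ∧ c < max a b) (min a b < d ∧ d < max a b) := by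
  obtain ⟨a', b', c', d', he, hf, hab, hac, had, hbc, hbd, hcd, hx⟩ := h
  replace hx := xor_def.1 hx
  rw [Sym2.eq_iff] at he hf
  have hne : ∀ {x y : ℕ}, (x : ZMod n) ≠ y → x ≠ y := fun h hxy => h (congrArg _ hxy)
  rcases he with ⟨rfl, rfl⟩ | ⟨rfl, rfl⟩ <;> rcases hf with ⟨rfl, rfl⟩ | ⟨rfl, rfl⟩ <;>
    have := hne hac <;> have := hne had <;> have := hne hbc <;> have := hne hbd <;>
    simp only [inArc_natCast_iff ha hb hc, inArc_natCast_iff ha hb hd,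
      inArc_natCast_iff hb ha hc, inArc_natCast_iff hb ha hd, xor_def] at hx ⊢ <;>
    omega

lemma mem_mk_natCast_iff {n a b : ℕ} [NeZero n] (ha : a < n) (hb : b < n) {v : ZMod n} :
    v ∈ s((a : ZMod n), (b : ZMod n)) ↔ v.val = a ∨ v.val = b := by
  rw [Sym2.mem_iff, ← (ZMod.val_injective n).eq_iff, ← (ZMod.val_injective n).eq_iff,
    ZMod.val_cast_of_lt ha, ZMod.val_cast_of_lt hb]

lemma mk_natCast_eq_mk_natCast_iff {n a b c d : ℕ} [NeZero n] (ha : a < n) (hb : b < n)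
    (hc : c < n) (hd : d < n) :
    s((a : ZMod n), (b : ZMod n)) = s((c : ZMod n), (d : ZMod n)) ↔
      a = c ∧ b = d ∨ a = d ∧ b = c := by
  have hcast : ∀ {x y : ℕ}, x < n → y < n → ((x : ZMod n) = y ↔ x = y) := fun hx hy => by
    rw [← (ZMod.val_injective n).eq_iff, ZMod.val_cast_of_lt hx, ZMod.val_cast_of_lt hy]
  rw [Sym2.eq_iff, hcast ha hc, hcast hb hd, hcast ha hd, hcast hb hc]

lemma Finset.card_mul_two_eq_of_existsUnique_mem {V : Type*} [Fintype V] [DecidableEq V]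
    (M : Finset (Sym2 V)) (hdiag : ∀ e ∈ M, ¬ e.IsDiag) (hM : ∀ v, ∃! e, e ∈ M ∧ v ∈ e) :
    #M * 2 = Fintype.card V := by
  have := card_mul_eq_card_mul (fun e v => v ∈ e) (s := M) (t := univ) (m := 2) (n := 1)
    (fun e he => by
      rw [← Sym2.card_toFinset_of_not_isDiag e (hdiag e he)]
      congr 1
      ext
      simp [bipartiteAbove, Sym2.mem_toFinset])
    (fun v _ => card_eq_one_iff_existsUnique.2 (by simpa [mem_bipartiteBelow] using hM v))
  simpa using this

def IsPairing (n : ℕ) (q : ℕ → ℕ) : Prop :=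
  ∀ x < n, q x < n ∧ q (q x) = x ∧ q x ≠ x

def IsNonCrossingPairing (n : ℕ) (q : ℕ → ℕ) : Prop :=
  ∀ x < n, ∀ y < n,
    ¬ Xor (min x (q x) < y ∧ y < max x (q x)) (min x (q x) < q y ∧ q y < max x (q x))

def pairingMatching (n : ℕ) (q : ℕ → ℕ) : Finset (Sym2 (ZMod n)) :=
  (range n).image fun x : ℕ => s((x : ZMod n), (q x : ZMod n))

section pairingMatching

variable {n : ℕ} {q : ℕ → ℕ}

lemma mem_pairingMatching {e : Sym2 (ZMod n)} :
    e ∈ pairingMatching n q ↔ ∃ x < n, s((x : ZMod n), (q x : ZMod n)) = e := by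
  simp [pairingMatching]

lemma not_isDiag_of_mem_pairingMatching (hq : IsPairing n q) {e : Sym2 (ZMod n)}
    (he : e ∈ pairingMatching n q) : ¬ e.IsDiag := by
  obtain ⟨x, hx, rfl⟩ := mem_pairingMatching.1 he
  obtain ⟨hqx, -, hne⟩ := hq x hx
  rw [Sym2.mk_isDiag_iff]
  intro h
  have h := congrArg ZMod.val h
  rw [ZMod.val_cast_of_lt hx, ZMod.val_cast_of_lt hqx] at h
  exact hne h.symm

lemma not_cross_of_mem_pairingMatching (hq : IsPairing n q) (hnc : IsNonCrossingPairing n q)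
    {e f : Sym2 (ZMod n)} (he : e ∈ pairingMatching n q) (hf : f ∈ pairingMatching n q) :
    ¬ Cross n e f := by
  obtain ⟨x, hx, rfl⟩ := mem_pairingMatching.1 he
  obtain ⟨y, hy, rfl⟩ := mem_pairingMatching.1 hf
  exact fun h => hnc x hx y hy (cross_natCast hx (hq x hx).1 hy (hq y hy).1 h)

variable [NeZero n]

lemma existsUnique_mem_pairingMatching (hq : IsPairing n q) (v : ZMod n) :
    ∃! e, e ∈ pairingMatching n q ∧ v ∈ e := by
  have hv := ZMod.val_lt v
  obtain ⟨hqv, hqqv, -⟩ := hq v.val hv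
  refine ⟨s(v, (q v.val : ZMod n)), ⟨?_, Sym2.mem_mk_left _ _⟩, ?_⟩
  · exact mem_pairingMatching.2 ⟨v.val, hv, by rw [ZMod.natCast_zmod_val]⟩
  rintro e ⟨he, hve⟩
  obtain ⟨x, hx, rfl⟩ := mem_pairingMatching.1 he
  obtain ⟨hqx, hqqx, -⟩ := hq x hx
  rcases (mem_mk_natCast_iff hx hqx).1 hve with h | h
  · rw [← h, ZMod.natCast_zmod_val]
  · rw [Sym2.eq_swap, ← h, ZMod.natCast_zmod_val, h, hqqx]

end pairingMatching

lemma isSPM_pairingMatching {m : ℕ} [NeZero m] {q : ℕ → ℕ} (hq : IsPairing (2 * m) q)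
    (hnc : IsNonCrossingPairing (2 * m) q) : IsSPM m (pairingMatching (2 * m) q) := by
  have hdiag := fun e => not_isDiag_of_mem_pairingMatching hq (e := e)
  have hcard := card_mul_two_eq_of_existsUnique_mem _ hdiag
    (existsUnique_mem_pairingMatching hq)
  rw [ZMod.card] at hcard
  exact ⟨by omega, hdiag, existsUnique_mem_pairingMatching hq,
    fun e he f hf => not_cross_of_mem_pairingMatching hq hnc he hf⟩

/-- Pairs `x` with `y` when `x + y ≡ 2j + 1 (mod 2m - 2)` on the vertices `0, …, 2m - 3`, and
swaps `2m - 2` with `2m - 1`. -/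
def parallelPairing (m j x : ℕ) : ℕ :=
  if x < 2 * m - 2 then (if x ≤ 2 * j + 1 then 2 * j + 1 - x else 2 * m - 1 + 2 * j - x)
  else 4 * m - 3 - x

section parallelPairing

variable {m j : ℕ}

lemma isPairing_parallelPairing (hj : j < m - 1) : IsPairing (2 * m) (parallelPairing m j) := by
  intro x hx
  simp only [parallelPairing]
  split_ifs <;> omega

lemma isNonCrossingPairing_parallelPairing (hj : j < m - 1) :
    IsNonCrossingPairing (2 * m) (parallelPairing m j) := by
  intro x hx y hy
  simp only [parallelPairing, xor_def]
  split_ifs <;> omega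

lemma notMem_of_mem_pairingMatching_parallelPairing (hj : j < m - 1)
    {e : Sym2 (ZMod (2 * m))} (he : e ∈ pairingMatching (2 * m) (parallelPairing m j))
    (hef : e ≠ s(((2 * m - 2 : ℕ) : ZMod (2 * m)), ((2 * m - 1 : ℕ) : ZMod (2 * m)))) :
    ((2 * m - 2 : ℕ) : ZMod (2 * m)) ∉ e ∧ ((2 * m - 1 : ℕ) : ZMod (2 * m)) ∉ e := by
  have : NeZero m := ⟨by omega⟩
  obtain ⟨x, hx, rfl⟩ := mem_pairingMatching.1 he
  have hqx := ((isPairing_parallelPairing hj) x hx).1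
  rw [Ne, mk_natCast_eq_mk_natCast_iff hx hqx (by omega) (by omega)] at hef
  rw [mem_mk_natCast_iff hx hqx, mem_mk_natCast_iff hx hqx, ZMod.val_cast_of_lt (by omega),
    ZMod.val_cast_of_lt (by omega)]
  simp only [parallelPairing] at hef ⊢
  split_ifs at hef ⊢ <;> omega

lemma eq_of_mem_pairingMatching_parallelPairing {j' : ℕ} (hj : j < m - 1) (hj' : j' < m - 1)
    {e : Sym2 (ZMod (2 * m))} (he : e ∈ pairingMatching (2 * m) (parallelPairing m j))
    (he' : e ∈ pairingMatching (2 * m) (parallelPairing m j'))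
    (hne : ((2 * m - 2 : ℕ) : ZMod (2 * m)) ∉ e) : j = j' := by
  have : NeZero m := ⟨by omega⟩
  obtain ⟨x, hx, rfl⟩ := mem_pairingMatching.1 he
  obtain ⟨y, hy, hxy⟩ := mem_pairingMatching.1 he'
  have hqx := ((isPairing_parallelPairing hj) x hx).1
  have hqy := ((isPairing_parallelPairing hj') y hy).1
  rw [mk_natCast_eq_mk_natCast_iff hy hqy hx hqx] at hxy
  rw [mem_mk_natCast_iff hx hqx, ZMod.val_cast_of_lt (by omega)] at hne
  simp only [parallelPairing] at hxy hne
  split_ifs at hxy hne <;> omega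

end parallelPairing

lemma le_card_filter_notMem_of_isBlockingSet {m : ℕ} {B : Finset (Sym2 (ZMod (2 * m)))}
    (hB : IsBlockingSet m B)
    (hf : s(((2 * m - 2 : ℕ) : ZMod (2 * m)), ((2 * m - 1 : ℕ) : ZMod (2 * m))) ∉ B) :
    m - 1 ≤
      #{e ∈ B | ((2 * m - 2 : ℕ) : ZMod (2 * m)) ∉ e ∧ ((2 * m - 1 : ℕ) : ZMod (2 * m)) ∉ e} := by
  simpa using card_le_card_of_forall_subsingleton
    (fun j e => e ∈ pairingMatching (2 * m) (parallelPairing m j)) (s := range (m - 1))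
    (fun j hj => by
      rw [mem_range] at hj
      have : NeZero m := ⟨by omega⟩
      obtain ⟨e, heM, heB⟩ := hB.2 _ (isSPM_pairingMatching (isPairing_parallelPairing hj)
        (isNonCrossingPairing_parallelPairing hj))
      have hef : e ≠ s(((2 * m - 2 : ℕ) : ZMod (2 * m)), ((2 * m - 1 : ℕ) : ZMod (2 * m))) := by
        rintro rfl
        exact hf heB
      exact ⟨e, mem_filter.2 ⟨heB, notMem_of_mem_pairingMatching_parallelPairing hj heM hef⟩,
        heM⟩)
    (fun e he j hj j' hj' => eq_of_mem_pairingMatching_parallelPairing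
      (mem_range.1 hj.1) (mem_range.1 hj'.1) hj.2 hj'.2 (mem_filter.1 he).2.1)

theorem no_other_edge_at_f_general (m : ℕ)
    (B : Finset (Sym2 (ZMod (2 * m)))) (hB : IsBlocker m B)
    (he : s(((2 * m - 3 : ℕ) : ZMod (2 * m)), ((2 * m - 2 : ℕ) : ZMod (2 * m))) ∈ B)
    (hf : s(((2 * m - 2 : ℕ) : ZMod (2 * m)), ((2 * m - 1 : ℕ) : ZMod (2 * m))) ∉ B) :
    ∀ g ∈ B, g ≠ s(((2 * m - 3 : ℕ) : ZMod (2 * m)), ((2 * m - 2 : ℕ) : ZMod (2 * m))) →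
      ((2 * m - 2 : ℕ) : ZMod (2 * m)) ∉ g ∧ ((2 * m - 1 : ℕ) : ZMod (2 * m)) ∉ g := by
  intro g hg hge
  by_contra hg_touches
  set T :=
    {e ∈ B | ((2 * m - 2 : ℕ) : ZMod (2 * m)) ∉ e ∧ ((2 * m - 1 : ℕ) : ZMod (2 * m)) ∉ e}
  have hT : m - 1 ≤ #T := le_card_filter_notMem_of_isBlockingSet hB.1 hf
  have heT : s(((2 * m - 3 : ℕ) : ZMod (2 * m)), ((2 * m - 2 : ℕ) : ZMod (2 * m))) ∉ T :=
    fun h => (mem_filter.1 h).2.1 (Sym2.mem_mk_right _ _)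
  have hgT : g ∉ T := fun h => hg_touches (mem_filter.1 h).2
  have hsub : insert _ (insert g T) ⊆ B :=
    insert_subset he (insert_subset hg (filter_subset _ _))
  have hcard := card_le_card hsub
  rw [card_insert_of_notMem (by simp [hge.symm, heT]), card_insert_of_notMem hgT, hB.2] at hcard
  omega

theorem no_other_edge_at_f (m : ℕ) (hm : 2 ≤ m)
    (B : Finset (Sym2 (ZMod (2 * m)))) (hB : IsBlocker m B)
    (he : s(((2 * m - 3 : ℕ) : ZMod (2 * m)), ((2 * m - 2 : ℕ) : ZMod (2 * m))) ∈ B)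
    (hf : s(((2 * m - 2 : ℕ) : ZMod (2 * m)), ((2 * m - 1 : ℕ) : ZMod (2 * m))) ∉ B) :
    ∀ g ∈ B, g ≠ s(((2 * m - 3 : ℕ) : ZMod (2 * m)), ((2 * m - 2 : ℕ) : ZMod (2 * m))) →
      ((2 * m - 2 : ℕ) : ZMod (2 * m)) ∉ g ∧ ((2 * m - 1 : ℕ) : ZMod (2 * m)) ∉ g :=
  no_other_edge_at_f_general m B hB he hf
end
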